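/- Let M be a finitely generated faithful multiplication R-module and N a proper submodule of M. The following are equivalent: (1) N is a quasi J-submodule of M; (2) M-rad(N) is a quasi J-submodule of M; (3) M-rad(N) is a J-submodule of M; (4) (M-rad(N) :_M ⟨r⟩) = M-rad(N) for every r ∈ R with r ∉ J(R), where (M-rad(N) :_M ⟨r⟩) = {m ∈ M : rm ∈ M-rad(N)}. -/

import Mathlib

open Submodule Pointwise


/-- The ideal `(J(R)M : M)` where `J(R)` is the Jacobson radical of `R`. -/
def jacobsonColon (R M : Type*) [CommRing R] [AddCommGroup M] [Module R M] : Ideal R :=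
  ((⊥ : Ideal R).jacobson • (⊤ : Submodule R M)).colon ⊤

/-- A prime submodule: a proper submodule `N` such that whenever `r • m ∈ N`,
either `m ∈ N` or `r • M ⊆ N`. -/
def IsPrimeSubmodule {R M : Type*} [CommRing R] [AddCommGroup M] [Module R M]
    (N : Submodule R M) : Prop :=
  N ≠ ⊤ ∧ ∀ (r : R) (m : M), r • m ∈ N → m ∈ N ∨ r ∈ N.colon ⊤

/-- `M`-rad(N): the intersection of all prime submodules of `M` containing `N`
(equal to `⊤` if there are none). -/
def Mrad {R M : Type*} [CommRing R] [AddCommGroup M] [Module R M]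
    (N : Submodule R M) : Submodule R M :=
  sInf {P : Submodule R M | IsPrimeSubmodule P ∧ N ≤ P}

/-- A quasi `J`-submodule. -/
def IsQuasiJSubmodule {R M : Type*} [CommRing R] [AddCommGroup M] [Module R M]
    (N : Submodule R M) : Prop :=
  N ≠ ⊤ ∧ ∀ (r : R) (m : M), r • m ∈ N → r ∉ jacobsonColon R M → m ∈ Mrad N

/-- A `J`-submodule. -/
def IsJSubmodule {R M : Type*} [CommRing R] [AddCommGroup M] [Module R M]
    (N : Submodule R M) : Prop :=
  N ≠ ⊤ ∧ ∀ (r : R) (m : M), r • m ∈ N → r ∉ jacobsonColon R M → m ∈ N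

/-!
In a finitely generated faithful multiplication module the map `I ↦ I • M` is injective with
inverse `N ↦ (N : M)`, so prime submodules are exactly the `p • M` with `p` prime and
`M-rad(N) = √(N : M) • M`; in particular `(J(R)M : M) = J(R)`. An element `m` lies in `I • M`
iff the ideal `(Rm : M)` lies in `I`, which reduces the quasi-`J` condition on `M-rad(N)` to the
statement that `r x ∈ √(N : M)` with `r ∉ J(R)` forces `x ∈ √(N : M)`. That follows from the
quasi-`J` property of `N` applied to `r ^ n • x ^ n • y ∈ N`, as `J(R)` is a radical ideal.
-/

section General

variable {R M : Type*} [CommRing R] [AddCommGroup M] [Module R M]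

lemma le_Mrad (N : Submodule R M) : N ≤ Mrad N :=
  le_sInf fun _ hP => hP.2

lemma Mrad_Mrad (N : Submodule R M) : Mrad (Mrad N) = Mrad N := by
  unfold Mrad
  congr 1
  ext P
  exact and_congr_right fun hP => ⟨(le_Mrad N).trans, fun h => sInf_le ⟨hP, h⟩⟩

lemma IsPrimeSubmodule.isPrime_colon {P : Submodule R M} (hP : IsPrimeSubmodule P) :
    (P.colon ⊤).IsPrime := by
  refine ⟨fun h => hP.1 (eq_top_iff.2 fun m _ => ?_), fun {a b} hab => ?_⟩
  · simpa using mem_colon.1 (h ▸ Submodule.mem_top : (1 : R) ∈ P.colon ⊤) m trivial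
  · refine or_iff_not_imp_left.2 fun ha => mem_colon.2 fun y _ => ?_
    refine (hP.2 a (b • y) ?_).resolve_right ha
    rw [smul_smul]
    exact mem_colon.1 hab y trivial

lemma mul_mem_colon_span_smul {x : R} {m : M} (hx : x ∈ (span R {m}).colon ⊤) (r : R) :
    r * x ∈ (span R {r • m}).colon ⊤ := by
  refine mem_colon.2 fun y _ => ?_
  obtain ⟨c, hc⟩ := mem_span_singleton.1 (mem_colon.1 hx y trivial)
  rw [mul_smul, ← hc, smul_comm]
  exact smul_mem _ c (mem_span_singleton_self _)

lemma IsJSubmodule.isQuasiJSubmodule {N : Submodule R M} (h : IsJSubmodule N) :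
    IsQuasiJSubmodule N :=
  ⟨h.1, fun r m hrm hr => le_Mrad N (h.2 r m hrm hr)⟩

lemma IsQuasiJSubmodule.of_Mrad {N : Submodule R M} (hN : N ≠ ⊤)
    (h : IsQuasiJSubmodule (Mrad N)) : IsQuasiJSubmodule N :=
  ⟨hN, fun r m hrm hr => Mrad_Mrad N ▸ h.2 r m (le_Mrad N hrm) hr⟩

end General

section FaithfulMultiplication

variable {R M : Type*} [CommRing R] [AddCommGroup M] [Module R M]

lemma smul_top_ne_top [Module.Finite R M] (hfaithful : ∀ r : R, (∀ m : M, r • m = 0) → r = 0)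
    {I : Ideal R} (hI : I ≠ ⊤) : I • (⊤ : Submodule R M) ≠ ⊤ := by
  intro h
  obtain ⟨r, hr1, hr0⟩ := exists_sub_one_mem_and_smul_eq_zero_of_fg_of_le_smul
    I ⊤ Module.Finite.fg_top h.ge
  rw [hfaithful r fun m => hr0 m trivial, zero_sub] at hr1
  exact hI ((Ideal.eq_top_iff_one I).2 (by simpa using I.neg_mem hr1))

/-- Multiplication modules are locally cyclic. -/
lemma exists_smul_mem_span_singleton
    (hmult : ∀ N : Submodule R M, N = N.colon ⊤ • (⊤ : Submodule R M))
    {I : Ideal R} (hI : I • (⊤ : Submodule R M) ≠ ⊤) :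
    ∃ (m : M) (x : R), x ∉ I ∧ ∀ y : M, x • y ∈ span R {m} := by
  obtain ⟨m, hm⟩ : ∃ m : M, m ∉ I • (⊤ : Submodule R M) := by
    by_contra! h
    exact hI (eq_top_iff.2 fun m _ => h m)
  have hK : ¬ (span R {m}).colon ⊤ ≤ I := fun hK =>
    hm (smul_mono_left hK ((hmult _).le (mem_span_singleton_self m)))
  obtain ⟨x, hx, hxI⟩ := SetLike.not_le_iff_exists.1 hK
  exact ⟨m, x, hxI, fun y => mem_colon.1 hx y trivial⟩

variable [Module.Finite R M] (hfaithful : ∀ r : R, (∀ m : M, r • m = 0) → r = 0)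
  (hmult : ∀ N : Submodule R M, N = N.colon ⊤ • (⊤ : Submodule R M))
include hfaithful hmult

lemma colon_smul_top (I : Ideal R) : (I • (⊤ : Submodule R M)).colon ⊤ = I := by
  refine le_antisymm (fun r hr => ?_) fun a ha => mem_colon.2 fun y _ => smul_mem_smul ha trivial
  by_contra hrI
  set K : Ideal R := I.colon {r}
  have hK : K ≠ ⊤ := fun h => hrI <| by
    simpa using mem_colon_singleton.1 ((Ideal.eq_top_iff_one K).1 h)
  obtain ⟨p, hp, hKp⟩ := Ideal.exists_le_maximal K hK
  obtain ⟨m, x, hxp, hx⟩ :=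
    exists_smul_mem_span_singleton hmult (smul_top_ne_top hfaithful hp.ne_top)
  -- `x • r • m = c • m` with `c ∈ I`; faithfulness turns this into `x * x * r = x * c ∈ I`.
  have hxrm : x • r • m ∈ I • span R {m} := by
    have := mem_map_of_mem (f := LinearMap.lsmul R M x) (mem_colon.1 hr m trivial)
    rw [map_smul''] at this
    exact smul_mono_right _ (map_le_iff_le_comap.2 fun y _ => mem_comap.2 (hx y)) this
  obtain ⟨c, hcI, hc⟩ := mem_smul_span_singleton.1 hxrm
  have hzero : x * (x * r - c) = 0 := hfaithful _ fun y => by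
    obtain ⟨d, hd⟩ := mem_span_singleton.1 (hx y)
    rw [mul_comm, mul_smul, ← hd, smul_comm, sub_smul, mul_smul, ← hc, sub_self, smul_zero]
  have hxxK : x * x ∈ K := mem_colon_singleton.2 <| by
    rw [smul_eq_mul, show x * x * r = x * c by linear_combination hzero]
    exact I.mul_mem_left x hcI
  exact hxp (hp.isPrime.mem_of_pow_mem 2 (pow_two x ▸ hKp hxxK))

lemma mem_smul_top_iff {I : Ideal R} {m : M} :
    m ∈ I • (⊤ : Submodule R M) ↔ (span R {m}).colon ⊤ ≤ I :=
  ⟨fun hm => colon_smul_top hfaithful hmult I ▸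
      colon_mono ((span_singleton_le_iff_mem _ _).2 hm) le_rfl,
    fun h => smul_mono_left h ((hmult _).le (mem_span_singleton_self m))⟩

lemma jacobsonColon_eq : jacobsonColon R M = (⊥ : Ideal R).jacobson :=
  colon_smul_top hfaithful hmult _

lemma isPrimeSubmodule_smul_top {p : Ideal R} (hp : p.IsPrime) :
    IsPrimeSubmodule (p • (⊤ : Submodule R M)) := by
  refine ⟨fun h => hp.ne_top ?_, fun r m hrm => or_iff_not_imp_right.2 fun hr => ?_⟩
  · rw [← colon_smul_top hfaithful hmult p, h, top_colon]
  · rw [colon_smul_top hfaithful hmult] at hr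
    rw [mem_smul_top_iff hfaithful hmult] at hrm ⊢
    exact fun x hx => (hp.mem_or_mem (hrm (mul_mem_colon_span_smul hx r))).resolve_left hr

lemma Mrad_eq_radical_smul_top (N : Submodule R M) :
    Mrad N = (N.colon ⊤).radical • (⊤ : Submodule R M) := by
  refine le_antisymm ?_ (le_sInf ?_)
  · have hcolon : (Mrad N).colon ⊤ ≤ (N.colon ⊤).radical := by
      rw [Ideal.radical_eq_sInf]
      refine le_sInf fun p ⟨hNp, hp⟩ => ?_
      have hN : N ≤ p • ⊤ := (hmult N).trans_le (smul_mono_left hNp)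
      rw [← colon_smul_top hfaithful hmult p]
      exact colon_mono (sInf_le ⟨isPrimeSubmodule_smul_top hfaithful hmult hp, hN⟩) le_rfl
    exact (hmult _).trans_le (smul_mono_left hcolon)
  · rintro P ⟨hP, hNP⟩
    have hrad : (N.colon ⊤).radical ≤ P.colon ⊤ :=
      hP.isPrime_colon.radical_le_iff.2 (colon_mono hNP le_rfl)
    exact (smul_mono_left hrad).trans_eq (hmult P).symm

lemma colon_Mrad (N : Submodule R M) : (Mrad N).colon ⊤ = (N.colon ⊤).radical := by
  rw [Mrad_eq_radical_smul_top hfaithful hmult, colon_smul_top hfaithful hmult]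

lemma mem_Mrad_iff {N : Submodule R M} {m : M} :
    m ∈ Mrad N ↔ (span R {m}).colon ⊤ ≤ (N.colon ⊤).radical := by
  rw [Mrad_eq_radical_smul_top hfaithful hmult, mem_smul_top_iff hfaithful hmult]

lemma Mrad_ne_top {N : Submodule R M} (hN : N ≠ ⊤) : Mrad N ≠ ⊤ := fun h => by
  have := colon_Mrad hfaithful hmult N
  rw [h, top_colon, eq_comm, Ideal.radical_eq_top] at this
  exact hN (by rw [hmult N, this, top_smul])

lemma IsQuasiJSubmodule.isJSubmodule_Mrad {N : Submodule R M} (h : IsQuasiJSubmodule N) :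
    IsJSubmodule (Mrad N) := by
  refine ⟨Mrad_ne_top hfaithful hmult h.1, fun r m hrm hr => ?_⟩
  rw [jacobsonColon_eq hfaithful hmult] at hr
  rw [mem_Mrad_iff hfaithful hmult] at hrm ⊢
  intro x hx
  obtain ⟨n, hn⟩ := hrm (mul_mem_colon_span_smul hx r)
  have hrn : r ^ n ∉ jacobsonColon R M := fun hrn =>
    hr (Ideal.isRadical_jacobson ⊥ ⟨n, jacobsonColon_eq hfaithful hmult ▸ hrn⟩)
  have hxn : x ^ n ∈ (Mrad N).colon ⊤ := mem_colon.2 fun y _ =>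
    h.2 _ _ (by rw [smul_smul, ← mul_pow]; exact mem_colon.1 hn y trivial) hrn
  rw [colon_Mrad hfaithful hmult] at hxn
  exact Ideal.radical_idem (N.colon ⊤) ▸ ⟨n, hxn⟩

end FaithfulMultiplication

theorem stmt17 {R M : Type*} [CommRing R] [AddCommGroup M] [Module R M]
    [Module.Finite R M]
    (hfaithful : ∀ r : R, (∀ m : M, r • m = 0) → r = 0)
    (hmult : ∀ N : Submodule R M, N = N.colon ⊤ • (⊤ : Submodule R M))
    (N : Submodule R M) (hN : N ≠ ⊤) :
    List.TFAE [IsQuasiJSubmodule N,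
      IsQuasiJSubmodule (Mrad N),
      IsJSubmodule (Mrad N),
      ∀ r : R, r ∉ (⊥ : Ideal R).jacobson →
        {m : M | r • m ∈ Mrad N} = (Mrad N : Set M)] := by
  have hJ := jacobsonColon_eq hfaithful hmult
  tfae_have 1 → 3 := IsQuasiJSubmodule.isJSubmodule_Mrad hfaithful hmult
  tfae_have 3 → 2 := IsJSubmodule.isQuasiJSubmodule
  tfae_have 2 → 1 := IsQuasiJSubmodule.of_Mrad hN
  tfae_have 3 → 4 := fun h r hr => Set.ext fun m =>
    ⟨fun hrm => h.2 r m hrm (hJ ▸ hr), fun hm => smul_mem _ r hm⟩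
  tfae_have 4 → 3 := fun h =>
    ⟨Mrad_ne_top hfaithful hmult hN, fun r m hrm hr => (h r (hJ ▸ hr)).subset hrm⟩
  tfae_finish
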